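/- arXiv:1011.2933 — 7 statements merged into one kernel-verified Lean document; each statement's English description precedes it below -/
import Mathlib

section
/- Let S : V → V be a linear operator on a vector space V whose range M is finite dimensional. Then I - S is injective if and only if I - S is surjective. -/
/-!
Write `T = I - S` and `M = range S`. Since `x - T x = S x`, the subspace `M` is `T`-invariant, it
contains `ker T`, and every preimage under `T` of a vector of `M` lies in `M`. Hence `T` is
injective, resp. surjective, exactly when its restriction to `M` is, and on the finite-dimensional
space `M` injectivity and surjectivity of an endomorphism agree.
-/

namespace LinearMap

section Ring

variable {R V : Type*} [Ring R] [AddCommGroup V] [Module R V]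
  {T : V →ₗ[R] V} {p : Submodule R V}

lemma mem_of_sub_apply_mem (hT : ∀ x, x - T x ∈ p) {x : V} (hx : T x ∈ p) : x ∈ p := by
  simpa using p.add_mem (hT x) hx

lemma mapsTo_of_forall_sub_apply_mem (hT : ∀ x, x - T x ∈ p) : ∀ x ∈ p, T x ∈ p :=
  fun x hx => by simpa using p.sub_mem hx (hT x)

lemma injective_iff_injective_restrict_of_forall_sub_apply_mem (hT : ∀ x, x - T x ∈ p) :
    Function.Injective T ↔
      Function.Injective (T.restrict (mapsTo_of_forall_sub_apply_mem hT)) := by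
  have hker : ker T ≤ p := fun x hx => mem_of_sub_apply_mem hT (by simp_all)
  rw [injective_restrict_iff, ← ker_eq_bot, disjoint_iff, inf_eq_right.mpr hker]

lemma surjective_iff_surjective_restrict_of_forall_sub_apply_mem (hT : ∀ x, x - T x ∈ p) :
    Function.Surjective T ↔
      Function.Surjective (T.restrict (mapsTo_of_forall_sub_apply_mem hT)) := by
  constructor
  · rintro hsurj ⟨y, hy⟩
    obtain ⟨x, rfl⟩ := hsurj y
    exact ⟨⟨x, mem_of_sub_apply_mem hT hy⟩, rfl⟩
  · intro hsurj y
    -- correct `y` by a vector of `p` mapped to the defect `y - T y ∈ p`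
    obtain ⟨m, hm⟩ := hsurj ⟨y - T y, hT y⟩
    refine ⟨y + m, ?_⟩
    have hm' : T m = y - T y := congrArg Subtype.val hm
    rw [map_add, hm', add_sub_cancel]

end Ring

lemma injective_iff_surjective_of_forall_sub_apply_mem {K V : Type*} [Field K] [AddCommGroup V]
    [Module K V] {T : V →ₗ[K] V} {p : Submodule K V} [FiniteDimensional K p]
    (hT : ∀ x, x - T x ∈ p) : Function.Injective T ↔ Function.Surjective T := by
  rw [injective_iff_injective_restrict_of_forall_sub_apply_mem hT,
    surjective_iff_surjective_restrict_of_forall_sub_apply_mem hT, injective_iff_surjective]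

end LinearMap

theorem stmt_3 {K V : Type*} [Field K] [AddCommGroup V] [Module K V]
    (S : V →ₗ[K] V) [FiniteDimensional K ↥(LinearMap.range S)] :
    Function.Injective ⇑((LinearMap.id : V →ₗ[K] V) - S) ↔
      Function.Surjective ⇑((LinearMap.id : V →ₗ[K] V) - S) :=
  LinearMap.injective_iff_surjective_of_forall_sub_apply_mem (p := LinearMap.range S) fun x => by
    simp
end

section
/- Let R : V → V be a bijective linear operator on a vector space V and let F : V → V be a linear operator with finite-dimensional range. Then R - F is injective if and only if R - F is surjective. -/
/-!
Writing `R - F = R ∘ (1 - G)` with `G = R⁻¹ F` of finite rank, it suffices to treat `1 - G`.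
This operator moves every vector only inside the finite-dimensional subspace `W = range G`, so
its kernel lies in `W` and its range is all of `V` as soon as it contains `W`. Hence injectivity
and surjectivity of `1 - G` reduce to the same properties of its restriction to `W`, where they
are equivalent by finite-dimensionality.
-/

open Function

namespace LinearMap

section SubMem

variable {R M : Type*} [Ring R] [AddCommGroup M] [Module R M] {T : M →ₗ[R] M}
  {W : Submodule R M}

theorem mapsTo_of_sub_mem (hW : ∀ x, x - T x ∈ W) : ∀ x ∈ W, T x ∈ W := fun x hx => by
  simpa using W.sub_mem hx (hW x)

theorem injective_iff_injOn_of_sub_mem (hW : ∀ x, x - T x ∈ W) :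
    Injective T ↔ Set.InjOn T W := by
  refine ⟨fun h => h.injOn, fun h => (injective_iff_map_eq_zero T).mpr fun x hx => ?_⟩
  have hxW : x ∈ W := by simpa [hx] using hW x
  exact h hxW W.zero_mem (by rw [hx, map_zero])

theorem surjective_iff_surjOn_of_sub_mem (hW : ∀ x, x - T x ∈ W) :
    Surjective T ↔ Set.SurjOn T W W := by
  constructor
  · intro h w hw
    obtain ⟨v, rfl⟩ := h w
    exact ⟨v, by simpa using W.add_mem (hW v) hw, rfl⟩
  · intro h y
    obtain ⟨w, -, hw⟩ := h (hW y)
    exact ⟨y + w, by rw [map_add, hw, add_sub_cancel]⟩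

end SubMem

theorem injective_one_sub_iff_surjective {K V : Type*} [DivisionRing K] [AddCommGroup V]
    [Module K V] (G : Module.End K V) [FiniteDimensional K (range G)] :
    Injective ⇑(1 - G) ↔ Surjective ⇑(1 - G) := by
  have hW : ∀ x, x - (1 - G) x ∈ range G := fun x => by simp
  rw [injective_iff_injOn_of_sub_mem hW, surjective_iff_surjOn_of_sub_mem hW]
  exact injOn_iff_surjOn (mapsTo_of_sub_mem hW)

end LinearMap

theorem stmt_4 {K V : Type*} [Field K] [AddCommGroup V] [Module K V]
    (R F : V →ₗ[K] V) (hR : Function.Bijective ⇑R)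
    [FiniteDimensional K ↥(LinearMap.range F)] :
    Function.Injective ⇑(R - F) ↔ Function.Surjective ⇑(R - F) := by
  let e := LinearEquiv.ofBijective R hR
  let G : Module.End K V := e.symm.toLinearMap ∘ₗ F
  have : FiniteDimensional K (LinearMap.range G) := by
    rw [LinearMap.range_comp]; infer_instance
  have hfactor : ⇑(R - F) = e ∘ ⇑(1 - G) := by
    ext x
    simp [e, G]
  rw [hfactor, EquivLike.comp_injective, EquivLike.comp_surjective]
  exact LinearMap.injective_one_sub_iff_surjective G
end

section
/- Let T : V → V be a linear operator on a vector space V. Suppose there exists a finite-rank linear operator F : V → V such that I - (T - F) is bijective. Then I - T is injective if and only if I - T is surjective. -/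
/-!
Since `S = I - (T - F)` is invertible, `S⁻¹ (I - T) = I - S⁻¹ F` differs from the identity by a
map of finite rank. If `v - f v` always lies in a finite-dimensional subspace `W`, then `f` maps
`W` into itself, `f v ∈ W` forces `v ∈ W`, and `ker f ≤ W`; so injectivity and surjectivity of `f`
both reduce to those of `f` restricted to `W`, where they are equivalent.
-/

open Function

namespace LinearMap

variable {K V : Type*} [Field K] [AddCommGroup V] [Module K V]

theorem injective_iff_surjective_of_sub_mem {f : V →ₗ[K] V} (W : Submodule K V)
    [FiniteDimensional K W] (hf : ∀ v, v - f v ∈ W) : Injective f ↔ Surjective f := by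
  have mapsTo : ∀ w ∈ W, f w ∈ W := fun w hw ↦ by simpa using W.sub_mem hw (hf w)
  have mem_of_apply_mem : ∀ v, f v ∈ W → v ∈ W := fun v hv ↦ by simpa using W.add_mem (hf v) hv
  have ker_le : ker f ≤ W := fun v hv ↦ mem_of_apply_mem v (by simp [mem_ker.mp hv])
  have restrict_iff : Injective (f.restrict mapsTo) ↔ Surjective (f.restrict mapsTo) :=
    injective_iff_surjective
  rw [injective_restrict_iff] at restrict_iff
  constructor
  · intro hinj y
    obtain ⟨w, hw⟩ := restrict_iff.mp (by simp [ker_eq_bot.mpr hinj]) ⟨y - f y, hf y⟩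
    refine ⟨y + w, ?_⟩
    have hw' : f w = y - f y := congrArg Subtype.val hw
    rw [map_add, hw', add_sub_cancel]
  · intro hsurj
    have hdisj : Disjoint W (ker f) := restrict_iff.mpr fun ⟨w, hw⟩ ↦ by
      obtain ⟨v, rfl⟩ := hsurj w
      exact ⟨⟨v, mem_of_apply_mem v hw⟩, rfl⟩
    exact ker_eq_bot.mp (hdisj.symm.eq_bot_of_le ker_le)

end LinearMap

theorem stmt_5 {K V : Type*} [Field K] [AddCommGroup V] [Module K V]
    (T F : V →ₗ[K] V) [FiniteDimensional K ↥(LinearMap.range F)]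
    (h : Function.Bijective ⇑((LinearMap.id : V →ₗ[K] V) - (T - F))) :
    Function.Injective ⇑((LinearMap.id : V →ₗ[K] V) - T) ↔
      Function.Surjective ⇑((LinearMap.id : V →ₗ[K] V) - T) := by
  let E := LinearEquiv.ofBijective _ h
  have sub_mem_range : ∀ v, v - (E.symm.toLinearMap ∘ₗ (LinearMap.id - T)) v ∈
      LinearMap.range (E.symm.toLinearMap ∘ₗ F) := by
    intro v
    refine ⟨v, E.injective ?_⟩
    have hE : E v = v - (T v - F v) := rfl
    simp only [LinearMap.comp_apply, LinearEquiv.coe_coe, map_sub, E.apply_symm_apply, hE,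
      LinearMap.sub_apply, LinearMap.id_apply]
    abel
  have : FiniteDimensional K (LinearMap.range (E.symm.toLinearMap ∘ₗ F)) := by
    rw [LinearMap.range_comp]; infer_instance
  have key := LinearMap.injective_iff_surjective_of_sub_mem _ sub_mem_range
  rwa [LinearMap.coe_comp, LinearEquiv.coe_coe, EquivLike.comp_injective,
    EquivLike.comp_surjective] at key
end

section
/- Let T be a bounded linear operator on a Banach space E. Suppose there exists a continuous finite-rank operator F on E such that ‖T - F‖ < 1. Then either I - T is invertible as a bounded operator (has a bounded linear inverse), or there exists a nonzero vector y ∈ E with T y = y. -/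
/-!
Writing `u = 1 - (T - F)`, the Neumann series makes `u` invertible, and
`1 - T = u * (1 - u⁻¹ * F)`. The operator `u⁻¹ * F` has finite rank, hence is compact, so the
Fredholm alternative applies to it: either `1 - u⁻¹ * F` is invertible, or `u⁻¹ * F` has a
nonzero fixed vector, which is then fixed by `T` as well.
-/

theorem ContinuousLinearMap.isCompactOperator_of_finiteDimensional_range
    {𝕜 E F : Type*} [NontriviallyNormedField 𝕜] [ProperSpace 𝕜]
    [NormedAddCommGroup E] [NormedSpace 𝕜 E] [NormedAddCommGroup F] [NormedSpace 𝕜 F]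
    (f : E →L[𝕜] F) [FiniteDimensional 𝕜 (LinearMap.range (f : E →ₗ[𝕜] F))] :
    IsCompactOperator f := by
  have := FiniteDimensional.proper 𝕜 (LinearMap.range (f : E →ₗ[𝕜] F))
  exact (isCompactOperator_of_locallyCompactSpace_dom
    f.rangeRestrict).clm_comp (Submodule.subtypeL _)

theorem one_sub_eq_mul_one_sub_inv_mul {R : Type*} [Ring R] {t k : R} (u : Rˣ)
    (hu : (u : R) = 1 - (t - k)) : 1 - t = u * (1 - ↑u⁻¹ * k) := by
  rw [mul_sub, mul_one, Units.mul_inv_cancel_left, hu]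
  abel

namespace IsCompactOperator

variable {𝕜 E : Type*} [NontriviallyNormedField 𝕜] [NormedAddCommGroup E] [NormedSpace 𝕜 E]
  [CompleteSpace E]

theorem isUnit_one_sub_or_exists_apply_eq_self {K : E →L[𝕜] E} (hK : IsCompactOperator K) :
    IsUnit (1 - K) ∨ ∃ y : E, y ≠ 0 ∧ K y = y := by
  rcases hK.hasEigenvalue_or_mem_resolventSet one_ne_zero with h | h
  · obtain ⟨y, hy⟩ := h.exists_hasEigenvector
    exact Or.inr ⟨y, hy.2, by simpa using hy.apply_eq_smul⟩
  · left
    simpa [spectrum.mem_resolventSet_iff] using h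

theorem isUnit_one_sub_or_exists_apply_eq_self_of_norm_sub_lt_one {T K : E →L[𝕜] E}
    (hK : IsCompactOperator K) (hTK : ‖T - K‖ < 1) :
    IsUnit (1 - T) ∨ ∃ y : E, y ≠ 0 ∧ T y = y := by
  obtain ⟨u, hu⟩ := isUnit_one_sub_of_norm_lt_one hTK
  have hfactor := one_sub_eq_mul_one_sub_inv_mul u hu
  have hK' : IsCompactOperator (↑u⁻¹ * K : E →L[𝕜] E) := hK.clm_comp _
  rcases hK'.isUnit_one_sub_or_exists_apply_eq_self with h | ⟨y, hy, hKy⟩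
  · exact Or.inl (hfactor ▸ u.isUnit.mul h)
  · refine Or.inr ⟨y, hy, ?_⟩
    have : (1 - T) y = 0 := by
      rw [hfactor]
      simp [hKy]
    rwa [sub_apply, sub_eq_zero, eq_comm] at this

end IsCompactOperator

theorem stmt_6 {𝕜 E : Type*} [RCLike 𝕜] [NormedAddCommGroup E] [NormedSpace 𝕜 E]
    [CompleteSpace E] (T F : E →L[𝕜] E)
    [FiniteDimensional 𝕜 ↥(LinearMap.range (F : E →ₗ[𝕜] E))]
    (hF : ‖T - F‖ < 1) :
    IsUnit (1 - T) ∨ ∃ y : E, y ≠ 0 ∧ T y = y :=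
  IsCompactOperator.isUnit_one_sub_or_exists_apply_eq_self_of_norm_sub_lt_one
    F.isCompactOperator_of_finiteDimensional_range hF
end

section
/- Let T be a bounded linear operator on a Banach space E such that there exists a continuous finite-rank operator F with ‖T - F‖ < 1. If I - T is injective, then I - T is surjective. -/
/-!
Put `u := 1 - (T - F)`, invertible by the Neumann series, and `S := u⁻¹ F`, again of finite rank.
Then `1 - T = u (1 - S)`, so it suffices that `1 - S` is surjective once injective. This is
linear algebra: `1 - S` maps the finite-dimensional space `range S` into itself, hence injectivity
makes it onto `range S`; solving `(1 - S) v = S y` there gives `(1 - S) (y + v) = y`.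
-/

namespace LinearMap

variable {K V : Type*} [DivisionRing K] [AddCommGroup V] [Module K V]

theorem surjective_one_sub_of_injective {S : V →ₗ[K] V} [FiniteDimensional K (range S)]
    (hinj : Function.Injective ⇑(1 - S)) : Function.Surjective ⇑(1 - S) := by
  have hmaps : ∀ x ∈ range S, (1 - S) x ∈ range S := fun x hx =>
    (range S).sub_mem hx (mem_range_self S x)
  have hsurjOn := (injOn_iff_surjOn hmaps).mp hinj.injOn
  intro y
  obtain ⟨v, -, hv⟩ := hsurjOn (mem_range_self S y)
  refine ⟨y + v, ?_⟩
  rw [map_add, hv, sub_apply, Module.End.one_apply, sub_add_cancel]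

end LinearMap

theorem stmt_7 {𝕜 E : Type*} [RCLike 𝕜] [NormedAddCommGroup E] [NormedSpace 𝕜 E]
    [CompleteSpace E] (T F : E →L[𝕜] E)
    [FiniteDimensional 𝕜 ↥(LinearMap.range (F : E →ₗ[𝕜] E))]
    (hF : ‖T - F‖ < 1) (hinj : Function.Injective ⇑(1 - T)) :
    Function.Surjective ⇑(1 - T) := by
  let u := Units.oneSub (T - F) hF
  set S : E →L[𝕜] E := ↑u⁻¹ * F
  have hfactor : 1 - T = (u : E →L[𝕜] E) * (1 - S) := by
    rw [mul_sub, mul_one, Units.mul_inv_cancel_left, Units.val_oneSub]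
    abel
  have : FiniteDimensional 𝕜 (LinearMap.range (S : E →ₗ[𝕜] E)) := by
    rw [ContinuousLinearMap.toLinearMap_mul, Module.End.mul_eq_comp, LinearMap.range_comp]
    infer_instance
  rw [hfactor] at hinj ⊢
  have hSinj : Function.Injective ⇑((1 : E →ₗ[𝕜] E) - S) :=
    Function.Injective.of_comp (f := ⇑(u : E →L[𝕜] E)) hinj
  exact (ContinuousLinearMap.isUnit_iff_bijective.mp u.isUnit).surjective.comp
    (LinearMap.surjective_one_sub_of_injective hSinj)
end

section
/- Let T be a compact operator on a Hilbert space H. Then I - T is injective if and only if I - T is surjective. -/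
/-!
Injectivity of `1 - T` gives surjectivity by the Fredholm alternative. Conversely, if `S = 1 - T`
is surjective but not injective, preimages under `S ^ n` of a nonzero vector of `ker S` make the
closed subspaces `ker S ^ n` strictly increasing. Riesz's lemma picks bounded `xₙ ∈ ker S ^ (n + 1)`
at distance `≥ 1` from `ker S ^ n`; as `S` maps each kernel into the previous one,
`T xₙ - T xₘ ∈ xₙ + ker S ^ n` for `m < n`, so the `T xₙ` are `1`-separated, contradicting
compactness of `T`.
-/

open Function

theorem LinearMap.ker_pow_lt_ker_pow_succ_of_surjective {R M : Type*} [Ring R] [AddCommGroup M]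
    [Module R M] {f : M →ₗ[R] M} (hsurj : Surjective f) (hinj : ¬ Injective f) (n : ℕ) :
    LinearMap.ker (f ^ n) < LinearMap.ker (f ^ (n + 1)) := by
  obtain ⟨x, hx, hx0⟩ : ∃ x ∈ LinearMap.ker f, x ≠ 0 := by
    simpa [← LinearMap.ker_eq_bot, Submodule.eq_bot_iff] using hinj
  obtain ⟨z, rfl⟩ := (Module.End.coe_pow f n ▸ hsurj.iterate n) x
  refine SetLike.lt_iff_le_and_exists.2 ⟨f.iterateKer.monotone n.le_succ, z, ?_, hx0⟩
  rwa [LinearMap.mem_ker, pow_succ', Module.End.mul_apply]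

section

variable {𝕜 E : Type*} [NontriviallyNormedField 𝕜] [NormedAddCommGroup E] [NormedSpace 𝕜 E]

theorem riesz_lemma_of_norm_lt_of_lt {c : 𝕜} (hc : 1 < ‖c‖) {R : ℝ} (hR : ‖c‖ < R)
    {F G : Submodule 𝕜 E} (hFc : IsClosed (F : Set E)) (hFG : F < G) :
    ∃ x ∈ G, ‖x‖ ≤ R ∧ ∀ y ∈ F, 1 ≤ ‖x - y‖ := by
  obtain ⟨-, g, hgG, hgF⟩ := SetLike.lt_iff_le_and_exists.1 hFG
  obtain ⟨⟨x, hxG⟩, hxR, hx⟩ := riesz_lemma_of_norm_lt (E := G) hc hR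
    (F := F.comap G.subtype) (hFc.preimage continuous_subtype_val) ⟨⟨g, hgG⟩, hgF⟩
  exact ⟨x, hxG, hxR, fun y hy => hx ⟨y, hFG.le hy⟩ hy⟩

namespace IsCompactOperator

variable {T : E →L[𝕜] E}

theorem exists_lt_norm_apply_sub_lt (hT : IsCompactOperator T) {x : ℕ → E} {R : ℝ}
    (hx : ∀ n, ‖x n‖ ≤ R) {ε : ℝ} (hε : 0 < ε) : ∃ m n, m < n ∧ ‖T (x m) - T (x n)‖ < ε := by
  obtain ⟨K, hK, hTK⟩ := hT.image_closedBall_subset_compact R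
  obtain ⟨_, _, φ, hφ, hlim⟩ :=
    hK.tendsto_subseq fun n => hTK ⟨x n, mem_closedBall_zero_iff.2 (hx n), rfl⟩
  obtain ⟨N, hN⟩ := Metric.cauchySeq_iff'.1 hlim.cauchySeq ε hε
  refine ⟨φ N, φ (N + 1), hφ N.lt_succ_self, ?_⟩
  simpa [dist_eq_norm, norm_sub_rev] using hN (N + 1) N.le_succ

theorem not_strictMono_of_mapsTo_one_sub (hT : IsCompactOperator T) {V : ℕ → Submodule 𝕜 E}
    (hclosed : ∀ n, IsClosed (V n : Set E)) (hmaps : ∀ n, Set.MapsTo ⇑(1 - T) (V (n + 1)) (V n)) :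
    ¬ StrictMono V := by
  intro hV
  obtain ⟨c, hc⟩ := NormedField.exists_one_lt_norm 𝕜
  choose x hxV hxR hxfar using fun n =>
    riesz_lemma_of_norm_lt_of_lt hc (lt_add_one ‖c‖) (hclosed n) (hV n.lt_succ_self)
  obtain ⟨m, n, hmn, hlt⟩ := hT.exists_lt_norm_apply_sub_lt hxR one_pos
  have hmem : (1 - T) (x n) + x m - (1 - T) (x m) ∈ V n :=
    sub_mem (add_mem (hmaps n (hxV n)) (hV.monotone hmn (hxV m)))
      (hV.monotone hmn.le (hmaps m (hxV m)))
  have hsep := hxfar n _ hmem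
  rw [show x n - ((1 - T) (x n) + x m - (1 - T) (x m)) = T (x n) - T (x m) by
      simp only [sub_apply, one_apply_eq_self]; abel,
    norm_sub_rev] at hsep
  exact hsep.not_gt hlt

theorem injective_one_sub_of_surjective (hT : IsCompactOperator T)
    (hsurj : Surjective ⇑(1 - T)) : Injective ⇑(1 - T) := by
  set S : E →L[𝕜] E := 1 - T
  by_contra hinj
  refine hT.not_strictMono_of_mapsTo_one_sub (V := fun n => LinearMap.ker (S ^ n).toLinearMap)
    (fun n => (S ^ n).isClosed_ker) (fun n x hx => ?_) (strictMono_nat_of_lt_succ fun n => ?_)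
  · change (S ^ n) (S x) = 0
    rwa [← mul_apply_eq_comp, ← pow_succ]
  · simp only [ContinuousLinearMap.toLinearMap_pow]
    exact LinearMap.ker_pow_lt_ker_pow_succ_of_surjective hsurj hinj n

theorem surjective_one_sub_of_injective [CompleteSpace E] (hT : IsCompactOperator T)
    (hinj : Injective ⇑(1 - T)) : Surjective ⇑(1 - T) := by
  have hnot : ¬ Module.End.HasEigenvalue (T : Module.End 𝕜 E) 1 := fun h => by
    obtain ⟨v, hv⟩ := h.exists_hasEigenvector
    refine hv.2 (hinj ?_)
    simpa [sub_eq_zero] using hv.apply_eq_smul.symm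
  have hunit := (hT.hasEigenvalue_or_mem_resolventSet one_ne_zero).resolve_left hnot
  rw [spectrum.mem_resolventSet_iff, map_one, ContinuousLinearMap.isUnit_iff_bijective] at hunit
  exact hunit.surjective

end IsCompactOperator

end

theorem stmt_14 {𝕜 H : Type*} [RCLike 𝕜] [NormedAddCommGroup H]
    [InnerProductSpace 𝕜 H] [CompleteSpace H]
    (T : H →L[𝕜] H) (hT : IsCompactOperator T) :
    Function.Injective ⇑(1 - T) ↔ Function.Surjective ⇑(1 - T) :=
  ⟨hT.surjective_one_sub_of_injective, hT.injective_one_sub_of_surjective⟩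
end

section
/- Let T : V → V be a linear operator on a vector space V, and F a finite-rank linear operator such that R := I - (T - F) is bijective. If there is no nonzero y ∈ V with T y = y, then I - T is bijective. -/
/-!
Write `I - T = R - F = R ∘ (I - S)` with `S = R⁻¹ F`, which again has finite-dimensional range `W`.
Then `I - S` maps `W` into itself, where injectivity implies surjectivity by finite-dimensionality;
to solve `x - S x = v` in general one solves `w - S w = S v` inside `W` and takes `x = v + w`.
-/

open Function

namespace LinearMap

variable {K V : Type*} [DivisionRing K] [AddCommGroup V] [Module K V]

theorem surjective_id_sub_of_injective (S : V →ₗ[K] V) [FiniteDimensional K (range S)]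
    (hS : Injective ((LinearMap.id : V →ₗ[K] V) - S)) :
    Surjective ((LinearMap.id : V →ₗ[K] V) - S) := by
  have hW : ∀ x ∈ range S, ((LinearMap.id : V →ₗ[K] V) - S) x ∈ range S := fun x hx =>
    sub_mem hx (mem_range_self S x)
  have hinj : Injective (((LinearMap.id : V →ₗ[K] V) - S).restrict hW) := fun a b hab =>
    Subtype.ext (hS (congrArg Subtype.val hab))
  intro v
  obtain ⟨w, hw⟩ := injective_iff_surjective.mp hinj ⟨S v, mem_range_self S v⟩
  have hw' : (w : V) - S w = S v := congrArg Subtype.val hw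
  refine ⟨v + w, ?_⟩
  simp only [sub_apply, id_apply, map_add]
  rw [hw', sub_add_cancel]

theorem bijective_sub_of_injective (e : V ≃ₗ[K] V) (F : V →ₗ[K] V)
    [FiniteDimensional K (range F)] (hinj : Injective (e.toLinearMap - F)) :
    Bijective (e.toLinearMap - F) := by
  set S : V →ₗ[K] V := e.symm.toLinearMap ∘ₗ F
  have : FiniteDimensional K (range S) := by
    rw [range_comp]
    infer_instance
  have hfac : e.toLinearMap - F = e.toLinearMap ∘ₗ ((LinearMap.id : V →ₗ[K] V) - S) := by
    ext x
    simp [S]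
  rw [hfac, coe_comp] at hinj ⊢
  have hS : Injective ((LinearMap.id : V →ₗ[K] V) - S) := (e.injective.of_comp_iff _).mp hinj
  exact e.bijective.comp ⟨hS, surjective_id_sub_of_injective S hS⟩

end LinearMap

theorem stmt_19 {K V : Type*} [Field K] [AddCommGroup V] [Module K V]
    (T F : V →ₗ[K] V) [FiniteDimensional K ↥(LinearMap.range F)]
    (hR : Function.Bijective ⇑((LinearMap.id : V →ₗ[K] V) - (T - F)))
    (h : ∀ y : V, T y = y → y = 0) :
    Function.Bijective ⇑((LinearMap.id : V →ₗ[K] V) - T) := by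
  set e := LinearEquiv.ofBijective _ hR
  have hsub : (LinearMap.id : V →ₗ[K] V) - T = e.toLinearMap - F := by
    ext x
    simp only [e, LinearMap.sub_apply, LinearMap.id_apply, LinearEquiv.coe_coe,
      LinearEquiv.ofBijective_apply]
    abel
  have hinj : Injective ((LinearMap.id : V →ₗ[K] V) - T) := by
    rw [← LinearMap.ker_eq_bot, LinearMap.ker_eq_bot']
    intro y hy
    exact h y (sub_eq_zero.mp hy).symm
  rw [hsub] at hinj ⊢
  exact LinearMap.bijective_sub_of_injective e F hinj
end
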